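/- The expected free energy decomposes into negative extrinsic value plus negative intrinsic value plus a non-negative term: E_{P(s,o|a)}[log P(s|a) - log P(s,o)] = E_{P(o|a)}[KL[P(s|o,a) | P(s|o)]] - E_{P(o|a)}[log P(o)] - E_{P(o|a)}[KL[P(s|o,a) | P(s|a)]], where the first term on the right is non-negative; hence the expected free energy is bounded below by -E_{P(o|a)}[log P(o)] - (expected information gain). -/
import Mathlib


variable {S O A : Type*}

/-- Expected free energy `E_{P(s,o|a)}[log P(s|a) - log P(s,o)]` for joint prediction
`J a s o = P(s,o|a)` and preference joint `Q s o = P(s,o)`. -/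
noncomputable def EFE [Fintype S] [Fintype O] (J : A → S → O → ℝ) (Q : S → O → ℝ)
    (a : A) : ℝ :=
  ∑ s, ∑ o, J a s o * (Real.log (∑ o', J a s o') - Real.log (Q s o))

/-- Expected posterior-vs-preference divergence `E_{P(o|a)} KL[P(s|o,a) | P(s|o)]`. -/
noncomputable def klPost [Fintype S] [Fintype O] (J : A → S → O → ℝ) (Q : S → O → ℝ)
    (a : A) : ℝ :=
  ∑ o, (∑ s, J a s o) * ∑ s,
    (J a s o / ∑ s', J a s' o) *
      Real.log ((J a s o / ∑ s', J a s' o) / (Q s o / ∑ s', Q s' o))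

/-- Extrinsic value `E_{P(o|a)}[log P(o)]`. -/
noncomputable def extrinsic [Fintype S] [Fintype O] (J : A → S → O → ℝ)
    (Q : S → O → ℝ) (a : A) : ℝ :=
  ∑ o, (∑ s, J a s o) * Real.log (∑ s, Q s o)

/-- Intrinsic value (expected information gain)
`E_{P(o|a)} KL[P(s|o,a) | P(s|a)]`. -/
noncomputable def intrinsic [Fintype S] [Fintype O] (J : A → S → O → ℝ) (a : A) : ℝ :=
  ∑ o, (∑ s, J a s o) * ∑ s,
    (J a s o / ∑ s', J a s' o) *
      Real.log ((J a s o / ∑ s', J a s' o) / (∑ o', J a s o'))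

lemma kl_nonneg' {S : Type*} [Fintype S] (f g : S → ℝ) (hf : ∀ s, 0 < f s)
    (hg : ∀ s, 0 < g s) (hfg : ∑ s, f s = ∑ s, g s) :
    0 ≤ ∑ s, f s * Real.log (f s / g s) := by
  have h : ∀ s, f s - g s ≤ f s * Real.log (f s / g s) := by
    intro s
    have h1 : Real.log (g s / f s) ≤ g s / f s - 1 :=
      Real.log_le_sub_one_of_pos (div_pos (hg s) (hf s))
    have h2 : Real.log (f s / g s) = - Real.log (g s / f s) := by
      rw [Real.log_div (hf s).ne' (hg s).ne', Real.log_div (hg s).ne' (hf s).ne']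
      ring
    have h3 : f s * (g s / f s - 1) = g s - f s := by
      rw [mul_sub, mul_one, mul_div_cancel₀ _ (hf s).ne']
    have h4 : f s * Real.log (g s / f s) ≤ g s - f s := by
      rw [← h3]; exact mul_le_mul_of_nonneg_left h1 (hf s).le
    rw [h2, mul_neg]; linarith
  calc (0:ℝ) = ∑ s, (f s - g s) := by rw [Finset.sum_sub_distrib, hfg]; ring
  _ ≤ _ := Finset.sum_le_sum fun s _ => h s

/-- The expected free energy decomposes as a non-negative expected KL term, minus
extrinsic value, minus intrinsic value; hence it is bounded below by
`-extrinsic - intrinsic`. -/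
theorem stmt17 [Fintype S] [Fintype O] (J : A → S → O → ℝ) (Q : S → O → ℝ)
    (hJpos : ∀ a s o, 0 < J a s o) (hJsum : ∀ a, ∑ s, ∑ o, J a s o = 1)
    (hQpos : ∀ s o, 0 < Q s o) (hQsum : ∑ s, ∑ o, Q s o = 1) :
    ∀ a : A,
      EFE J Q a = klPost J Q a - extrinsic J Q a - intrinsic J a ∧
      0 ≤ klPost J Q a ∧
      -extrinsic J Q a - intrinsic J a ≤ EFE J Q a := by
  intro a
  have hS : Nonempty S := by
    by_contra h
    rw [not_nonempty_iff] at h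
    have := hJsum a
    simp at this
  have hO : Nonempty O := by
    by_contra h
    rw [not_nonempty_iff] at h
    have := hJsum a
    simp at this
  have hpo : ∀ o : O, 0 < ∑ s, J a s o := fun o =>
    Finset.sum_pos (fun s _ => hJpos a s o) Finset.univ_nonempty
  have hps : ∀ s : S, 0 < ∑ o, J a s o := fun s =>
    Finset.sum_pos (fun o _ => hJpos a s o) Finset.univ_nonempty
  have hqo : ∀ o : O, 0 < ∑ s, Q s o := fun o =>
    Finset.sum_pos (fun s _ => hQpos s o) Finset.univ_nonempty
  have hkl : 0 ≤ klPost J Q a := by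
    apply Finset.sum_nonneg
    intro o _
    apply mul_nonneg (hpo o).le
    have := kl_nonneg' (fun s => J a s o / ∑ s', J a s' o)
      (fun s => Q s o / ∑ s', Q s' o)
      (fun s => div_pos (hJpos a s o) (hpo o)) (fun s => div_pos (hQpos s o) (hqo o))
      (by rw [← Finset.sum_div, ← Finset.sum_div, div_self (hpo o).ne',
            div_self (hqo o).ne'])
    exact this
  have hmain : EFE J Q a = klPost J Q a - extrinsic J Q a - intrinsic J a := by
    have key : klPost J Q a = EFE J Q a + extrinsic J Q a + intrinsic J a := by
      unfold klPost EFE extrinsic intrinsic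
      rw [Finset.sum_comm (f := fun s o => J a s o *
        (Real.log (∑ o', J a s o') - Real.log (Q s o)))]
      rw [← Finset.sum_add_distrib, ← Finset.sum_add_distrib]
      apply Finset.sum_congr rfl
      intro o _
      rw [Finset.mul_sum, Finset.mul_sum, Finset.sum_mul,
        ← Finset.sum_add_distrib, ← Finset.sum_add_distrib]
      apply Finset.sum_congr rfl
      intro s _
      have e1 : Real.log ((J a s o / ∑ s', J a s' o) / (Q s o / ∑ s', Q s' o))
          = Real.log (J a s o) - Real.log (∑ s', J a s' o)
            - Real.log (Q s o) + Real.log (∑ s', Q s' o) := by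
        rw [Real.log_div (div_pos (hJpos a s o) (hpo o)).ne' (div_pos (hQpos s o) (hqo o)).ne',
          Real.log_div (hJpos a s o).ne' (hpo o).ne',
          Real.log_div (hQpos s o).ne' (hqo o).ne']
        ring
      have e2 : Real.log ((J a s o / ∑ s', J a s' o) / (∑ o', J a s o'))
          = Real.log (J a s o) - Real.log (∑ s', J a s' o)
            - Real.log (∑ o', J a s o') := by
        rw [Real.log_div (div_pos (hJpos a s o) (hpo o)).ne' (hps s).ne',
          Real.log_div (hJpos a s o).ne' (hpo o).ne']
      rw [e1, e2]
      have hcan : (∑ s', J a s' o) * (J a s o / ∑ s', J a s' o) = J a s o :=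
        mul_div_cancel₀ _ (hpo o).ne'
      rw [← mul_assoc, ← mul_assoc, hcan]
      ring
    linarith
  exact ⟨hmain, hkl, by linarith⟩
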